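/- arXiv:2201.06145 — 2 statements merged into one kernel-verified Lean document; each statement's English description precedes it below -/
import Mathlib

section
/- If A and B are bounded, closed, nonempty, convex subsets of ℝ², then the Hausdorff distance between A and B equals the Hausdorff distance between their topological boundaries: d_H(A,B) = d_H(∂A, ∂B). -/
/-!
Let `x ∈ A`. Moving from `x` in two opposite directions one leaves the bounded set `A`, so `x`
lies on a segment between two boundary points of `A`; since the distance to the convex set `B` is
a convex function, `infDist x B` is at most its value at one of them, which is at most
`d_H(∂A, ∂B)`. Conversely, let `a ∈ ∂A`. If `a ∉ B`, the nearest points of `B` to `a` are on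
`∂B`. If `a ∈ B`, the ball of radius `ρ = infDist a ∂B` about `a` lies in `B`; pushing a point
`z ∉ A` close to `a` away from its nearest point of `A` by `r < ρ` gives a point of `B` at
distance at least `r` from `A`, so `ρ ≤ d_H(A, B)`.
-/

open Bornology Metric Set

theorem IsPreconnected.inter_frontier_nonempty {X : Type*} [TopologicalSpace X] {s t : Set X}
    (hs : IsPreconnected s) (hst : (s ∩ t).Nonempty) (hst' : (s \ t).Nonempty) :
    (s ∩ frontier t).Nonempty := by
  by_contra! h
  have hcover : s ⊆ interior t ∪ (closure t)ᶜ := fun x hx => by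
    rw [mem_union, or_iff_not_imp_left]
    exact fun hi hc => h.subset ⟨hx, hc, hi⟩
  obtain ⟨x, hxs, hxt⟩ := hst
  obtain ⟨y, hys, hyt⟩ := hst'
  have hsub := hs.subset_left_of_subset_union isOpen_interior isClosed_closure.isOpen_compl
    (disjoint_compl_right.mono_left interior_subset_closure) hcover
    ⟨x, hxs, (hcover hxs).resolve_right (not_not.2 (subset_closure hxt))⟩
  exact hyt (interior_subset (hsub hys))

section NormedSpace

variable {E : Type*} [NormedAddCommGroup E] [NormedSpace ℝ E] {s t : Set E}

theorem infDist_frontier_le_dist {x y : E} (hx : x ∈ s) (hy : y ∉ s) :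
    infDist x (frontier s) ≤ dist x y := by
  obtain ⟨w, hw, hws⟩ := (convex_segment x y).isPreconnected.inter_frontier_nonempty
    ⟨x, left_mem_segment ℝ x y, hx⟩ ⟨y, right_mem_segment ℝ x y, hy⟩
  calc infDist x (frontier s) ≤ dist x w := infDist_le_dist_of_mem hws
    _ ≤ dist x y := by
      rw [← dist_add_dist_of_mem_segment hw]
      exact le_add_of_nonneg_right dist_nonneg

theorem exists_nonneg_add_smul_mem_frontier (hs : IsBounded s) {a v : E} (ha : a ∈ s)
    (hv : v ≠ 0) : ∃ θ : ℝ, 0 ≤ θ ∧ a + θ • v ∈ frontier s := by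
  obtain ⟨r, hr⟩ := (isBounded_iff_subset_ball a).1 hs
  have hray : IsPreconnected ((fun θ : ℝ => a + θ • v) '' Ici 0) :=
    isPreconnected_Ici.image _ (by fun_prop)
  have hout : a + (|r| / ‖v‖) • v ∉ s := fun h => by
    have := mem_ball.1 (hr h)
    rw [dist_eq_norm, add_sub_cancel_left, norm_smul, Real.norm_eq_abs, abs_div, abs_abs,
      abs_norm, div_mul_cancel₀ _ (norm_ne_zero_iff.2 hv)] at this
    exact (le_abs_self r).not_gt this
  obtain ⟨_, ⟨θ, hθ, rfl⟩, hθs⟩ := hray.inter_frontier_nonempty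
    ⟨a, ⟨0, mem_Ici.2 le_rfl, by simp⟩, ha⟩ ⟨_, ⟨_, mem_Ici.2 (by positivity), rfl⟩, hout⟩
  exact ⟨θ, hθ, hθs⟩

theorem exists_mem_frontier_mem_segment [Nontrivial E] (hs : IsBounded s) {a : E} (ha : a ∈ s) :
    ∃ p ∈ frontier s, ∃ q ∈ frontier s, a ∈ segment ℝ p q := by
  obtain ⟨v, hv⟩ := exists_ne (0 : E)
  obtain ⟨θ, hθ, hp⟩ := exists_nonneg_add_smul_mem_frontier hs ha hv
  obtain ⟨θ', hθ', hq⟩ := exists_nonneg_add_smul_mem_frontier hs ha (neg_ne_zero.2 hv)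
  refine ⟨_, hp, _, hq, mem_segment_iff_sameRay.2 ?_⟩
  rw [sub_add_cancel_left, ← smul_neg, add_sub_cancel_left]
  exact (SameRay.sameRay_nonneg_smul_left (-v) hθ).nonneg_smul_right hθ'

theorem Convex.convexOn_infDist (ht : Convex ℝ t) (hne : t.Nonempty) :
    ConvexOn ℝ univ (infDist · t) := by
  refine ⟨convex_univ, fun x _ y _ a b ha hb hab => le_of_forall_pos_le_add fun ε hε => ?_⟩
  obtain ⟨x', hx', hxx'⟩ := (infDist_lt_iff hne).1 (lt_add_of_pos_right (infDist x t) hε)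
  obtain ⟨y', hy', hyy'⟩ := (infDist_lt_iff hne).1 (lt_add_of_pos_right (infDist y t) hε)
  calc infDist (a • x + b • y) t ≤ dist (a • x + b • y) (a • x' + b • y') :=
        infDist_le_dist_of_mem (ht hx' hy' ha hb hab)
    _ ≤ a * dist x x' + b * dist y y' := by
        refine (dist_add_add_le _ _ _ _).trans_eq ?_
        rw [dist_smul₀, dist_smul₀, Real.norm_of_nonneg ha, Real.norm_of_nonneg hb]
    _ ≤ a * (infDist x t + ε) + b * (infDist y t + ε) := by gcongr
    _ = a • infDist x t + b • infDist y t + ε := by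
        rw [smul_eq_mul, smul_eq_mul]; linear_combination ε * hab

theorem infDist_le_hausdorffDist_frontier [Nontrivial E] (hs : IsBounded s) (ht : Convex ℝ t)
    (hfin : hausdorffEDist (frontier s) (frontier t) ≠ ⊤) {x : E} (hx : x ∈ s) :
    infDist x t ≤ hausdorffDist (frontier s) (frontier t) := by
  obtain ⟨p, hp, q, hq, hpq⟩ := exists_mem_frontier_mem_segment hs hx
  have hft : (frontier t).Nonempty := nonempty_of_hausdorffEDist_ne_top ⟨p, hp⟩ hfin
  have hfrontier : ∀ y ∈ frontier s, infDist y t ≤ hausdorffDist (frontier s) (frontier t) :=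
    fun y hy => calc
      infDist y t = infDist y (closure t) := infDist_closure.symm
      _ ≤ infDist y (frontier t) := infDist_le_infDist_of_subset frontier_subset_closure hft
      _ ≤ _ := infDist_le_hausdorffDist_of_mem hy hfin
  calc infDist x t ≤ max (infDist p t) (infDist q t) :=
        (ht.convexOn_infDist (hft.mono frontier_subset_closure).of_closure).le_max_of_mem_segment
          (mem_univ p) (mem_univ q) hpq
    _ ≤ _ := max_le (hfrontier p hp) (hfrontier q hq)

theorem Bornology.IsBounded.frontier_nonempty [Nontrivial E] (hs : IsBounded s)
    (hne : s.Nonempty) : (frontier s).Nonempty :=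
  nonempty_frontier_iff.2 ⟨hne, fun h => NormedSpace.unbounded_univ ℝ E (h ▸ hs)⟩

end NormedSpace

section InnerProductSpace

variable {E : Type*} [NormedAddCommGroup E] [InnerProductSpace ℝ E] {s t : Set E}

theorem Convex.exists_dist_eq_le_infDist (hs : Convex ℝ s) (hne : s.Nonempty) (hsc : IsComplete s)
    {z : E} (hz : z ∉ s) {r : ℝ} (hr : 0 ≤ r) : ∃ y, dist z y = r ∧ r ≤ infDist y s := by
  obtain ⟨p, hp, hmin⟩ := exists_norm_eq_iInf_of_complete_convex hne hsc hs z
  have hobtuse := (norm_eq_iInf_iff_real_inner_le_zero hs hp).1 hmin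
  have hzp : z - p ≠ 0 := sub_ne_zero.2 (ne_of_mem_of_not_mem hp hz).symm
  set u := ‖z - p‖⁻¹ • (z - p)
  have hu : ‖u‖ = 1 := norm_smul_inv_norm hzp
  refine ⟨z + r • u, by rw [dist_self_add_right, norm_smul, hu, mul_one, Real.norm_of_nonneg hr], (le_infDist hne).2 fun x hx => ?_⟩
  have hzpu : inner ℝ (z - p) u = ‖z - p‖ := by
    rw [real_inner_smul_right, real_inner_self_eq_norm_sq]
    field_simp [norm_ne_zero_iff.2 hzp]
  have hxpu : inner ℝ (x - p) u ≤ 0 := by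
    rw [real_inner_smul_right, real_inner_comm]
    exact mul_nonpos_of_nonneg_of_nonpos (by positivity) (hobtuse x hx)
  calc r ≤ inner ℝ (z - p) u + r * inner ℝ u u - inner ℝ (x - p) u := by
        rw [hzpu, real_inner_self_eq_norm_sq, hu]; linarith [norm_nonneg (z - p)]
    _ = inner ℝ (z + r • u - x) u := by
        rw [show z + r • u - x = (z - p) + r • u - (x - p) by abel]
        simp only [inner_sub_left, inner_add_left, real_inner_smul_left]
    _ ≤ ‖z + r • u - x‖ := by simpa [hu] using real_inner_le_norm (z + r • u - x) u
    _ = dist (z + r • u) x := (dist_eq_norm _ _).symm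

theorem infDist_frontier_le_hausdorffDist [CompleteSpace E] (hsc : IsClosed s) (hs : Convex ℝ s)
    (hfin : hausdorffEDist s t ≠ ⊤) {a : E} (ha : a ∈ frontier s) :
    infDist a (frontier t) ≤ hausdorffDist s t := by
  have has : a ∈ s := hsc.frontier_subset ha
  by_cases hat : a ∉ t
  · have ht := nonempty_of_hausdorffEDist_ne_top ⟨a, has⟩ hfin
    calc infDist a (frontier t) ≤ infDist a t := (le_infDist ht).2 fun b hb => by
          simpa only [frontier_compl] using infDist_frontier_le_dist (s := tᶜ) hat (not_not.2 hb)
      _ ≤ hausdorffDist s t := infDist_le_hausdorffDist_of_mem has hfin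
  rw [not_not] at hat
  refine le_of_forall_lt_imp_le_of_dense fun r hr => ?_
  rcases lt_or_ge r 0 with hr0 | hr0
  · exact hr0.le.trans hausdorffDist_nonneg
  obtain ⟨z, hz, haz⟩ := Metric.mem_closure_iff.1 (frontier_subset_closure (frontier_compl s ▸ ha)) _ (sub_pos.2 hr)
  obtain ⟨y, hzy, hy⟩ := hs.exists_dist_eq_le_infDist ⟨a, has⟩ hsc.isComplete hz hr0
  have hyt : y ∈ t := by
    by_contra hyt
    linarith [infDist_frontier_le_dist hat hyt, dist_triangle a z y]
  calc r ≤ infDist y s := hy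
    _ ≤ hausdorffDist t s := infDist_le_hausdorffDist_of_mem hyt (by rwa [hausdorffEDist_comm])
    _ = hausdorffDist s t := hausdorffDist_comm

end InnerProductSpace

/-- Property (H3): if `A` and `B` are bounded, closed, nonempty, convex subsets of ℝ²,
then the Hausdorff distance between `A` and `B` equals the Hausdorff distance
between their topological boundaries. -/
theorem stmt_2 (A B : Set (EuclideanSpace ℝ (Fin 2)))
    (hAb : IsBounded A) (hBb : IsBounded B)
    (hAc : IsClosed A) (hBc : IsClosed B)
    (hA : A.Nonempty) (hB : B.Nonempty)
    (hAconv : Convex ℝ A) (hBconv : Convex ℝ B) :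
    Metric.hausdorffDist A B = Metric.hausdorffDist (frontier A) (frontier B) := by
  have hfin : hausdorffEDist A B ≠ ⊤ := hausdorffEDist_ne_top_of_nonempty_of_bounded hA hB hAb hBb
  have hfin_frontier : hausdorffEDist (frontier A) (frontier B) ≠ ⊤ :=
    hausdorffEDist_ne_top_of_nonempty_of_bounded (hAb.frontier_nonempty hA)
      (hBb.frontier_nonempty hB) (hAb.closure.subset frontier_subset_closure)
      (hBb.closure.subset frontier_subset_closure)
  apply le_antisymm
  · refine hausdorffDist_le_of_infDist hausdorffDist_nonneg (fun x hx => ?_) fun x hx => ?_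
    · exact infDist_le_hausdorffDist_frontier hAb hBconv hfin_frontier hx
    · rw [hausdorffDist_comm]
      exact infDist_le_hausdorffDist_frontier hBb hAconv (by rwa [hausdorffEDist_comm]) hx
  · refine hausdorffDist_le_of_infDist hausdorffDist_nonneg (fun x hx => ?_) fun x hx => ?_
    · exact infDist_frontier_le_hausdorffDist hAc hAconv hfin hx
    · rw [hausdorffDist_comm]
      exact infDist_frontier_le_hausdorffDist hBc hBconv (by rwa [hausdorffEDist_comm]) hx
end

section
/- Let Ω ⊆ ℝ² be a bounded open convex set, and let F ⊆ closure(Ω) be a closed set. Suppose σ_k : [0,1] → closure(Ω) are Lipschitz curves of the form σ_k(t) = q + ℓ_k ∫₀ᵗ (cos θ_k(s), sin θ_k(s)) ds with each θ_k nondecreasing, θ_k(1) − θ_k(0) ≤ 2π, σ_k(1) = p for fixed distinct points p, q ∈ ∂Ω. Then there exist a subsequence and a Lipschitz curve σ : [0,1] → closure(Ω) of the same form (σ(t) = q + ℓ ∫₀ᵗ (cos θ(s), sin θ(s)) ds with θ nondecreasing, θ(1) − θ(0) ≤ 2π, σ(1) = p) such that σ_k → σ in W^{1,1}([0,1]; ℝ²)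 and uniformly on [0,1]. -/
open Set Filter MeasureTheory Bornology
open scoped NNReal Topology

noncomputable abbrev dirVec (θ : ℝ → ℝ) (s : ℝ) : EuclideanSpace ℝ (Fin 2) :=
  (EuclideanSpace.equiv (Fin 2) ℝ).symm ![Real.cos (θ s), Real.sin (θ s)]

/-!
Shift each angle function by a multiple of `2π` and extend it constantly outside `[0, 1]`:
the resulting angles are monotone with values in `[0, 4π]`. The lengths satisfy
`‖p - q‖ ≤ ℓₖ ≤ 14 diam Ω`: since the direction turns by at most `2π`, each curve splits into
seven arcs along which the direction stays within `π / 6` of a fixed one, so every arc is at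
most twice as long as its chord. Bolzano–Weierstrass and Helly's selection theorem give a
subsequence with `ℓₖ → ℓ` and `θₖ → θ` almost everywhere; by dominated convergence the
derivatives `ℓₖ (cos θₖ, sin θₖ)` converge in `L¹`, and the `L¹` distance of the derivatives
bounds the uniform distance of the curves.
-/

open Real
open scoped Interval

lemma norm_dirVec (θ : ℝ → ℝ) (s : ℝ) : ‖dirVec θ s‖ = 1 := by
  simp [EuclideanSpace.norm_eq, Fin.sum_univ_two]

lemma continuous_dirVec_id : Continuous (dirVec id) :=
  (EuclideanSpace.equiv (Fin 2) ℝ).symm.continuous.comp <|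
    continuous_pi fun i => by fin_cases i <;> simp [continuous_cos, continuous_sin]

lemma inner_dirVec (θ ψ : ℝ → ℝ) (s t : ℝ) :
    inner ℝ (dirVec θ s) (dirVec ψ t) = cos (ψ t - θ s) := by
  simp [PiLp.inner_apply, Fin.sum_univ_two, cos_sub]

lemma Measurable.aestronglyMeasurable_dirVec {θ : ℝ → ℝ} (hθ : Measurable θ) {μ : Measure ℝ} :
    AEStronglyMeasurable (dirVec θ) μ :=
  (continuous_dirVec_id.measurable.comp hθ).aestronglyMeasurable

lemma intervalIntegrable_dirVec {θ : ℝ → ℝ} (hθ : Measurable θ) (a b : ℝ) :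
    IntervalIntegrable (dirVec θ) volume a b :=
  (intervalIntegrable_const (c := (1 : ℝ))).mono_fun' hθ.aestronglyMeasurable_dirVec
    (.of_forall fun s => (norm_dirVec θ s).le)

lemma norm_integral_dirVec_le (θ : ℝ → ℝ) {a b : ℝ} (hab : a ≤ b) :
    ‖∫ s in a..b, dirVec θ s‖ ≤ b - a := by
  have := intervalIntegral.norm_integral_le_of_norm_le_const (a := a) (b := b)
    fun s _ => (norm_dirVec θ s).le
  rwa [one_mul, abs_of_nonneg (sub_nonneg.2 hab)] at this

lemma mul_cos_le_norm_integral_dirVec {ψ : ℝ → ℝ} (hψ : Measurable ψ) {a b β δ : ℝ}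
    (hab : a ≤ b) (hδ : δ ≤ π) (hclose : ∀ s ∈ Ioo a b, |ψ s - β| ≤ δ) :
    (b - a) * cos δ ≤ ‖∫ s in a..b, dirVec ψ s‖ := by
  let u := dirVec id β
  have hcos : ∀ s ∈ Ioo a b, cos δ ≤ cos (ψ s - β) := fun s hs => by
    rw [← cos_abs (ψ s - β)]
    exact cos_le_cos_of_nonneg_of_le_pi (abs_nonneg _) hδ (hclose s hs)
  have hint : IntervalIntegrable (fun s => cos (ψ s - β)) volume a b :=
    (intervalIntegrable_const (c := (1 : ℝ))).mono_fun'
      (continuous_cos.measurable.comp (hψ.sub_const β)).aestronglyMeasurable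
      (.of_forall fun s => abs_cos_le_one _)
  calc (b - a) * cos δ = ∫ _ in a..b, cos δ := by simp
    _ ≤ ∫ s in a..b, cos (ψ s - β) :=
        intervalIntegral.integral_mono_on_of_le_Ioo hab intervalIntegrable_const hint hcos
    _ = inner ℝ u (∫ s in a..b, dirVec ψ s) := by
        rw [← innerSL_apply_apply ℝ,
          ← (innerSL ℝ u).intervalIntegral_comp_comm (intervalIntegrable_dirVec hψ a b)]
        simp only [innerSL_apply_apply, u, inner_dirVec, id]
    _ ≤ ‖∫ s in a..b, dirVec ψ s‖ := by
        simpa only [u, norm_dirVec, one_mul] using real_inner_le_norm u (∫ s in a..b, dirVec ψ s)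

noncomputable def normalizedAngle (θ : ℝ → ℝ) : ℝ → ℝ :=
  IccExtend zero_le_one fun t : Icc (0 : ℝ) 1 => θ t - ⌊θ 0 / (2 * π)⌋ * (2 * π)

section normalizedAngle

variable {θ : ℝ → ℝ}

lemma normalizedAngle_of_mem {t : ℝ} (ht : t ∈ Icc (0 : ℝ) 1) :
    normalizedAngle θ t = θ t - ⌊θ 0 / (2 * π)⌋ * (2 * π) :=
  IccExtend_of_mem _ _ ht

lemma monotone_normalizedAngle (hθ : MonotoneOn θ (Icc 0 1)) : Monotone (normalizedAngle θ) :=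
  Monotone.IccExtend _ fun _ _ hst => sub_le_sub_right (monotoneOn_iff_monotone.1 hθ hst) _

lemma normalizedAngle_sub_normalizedAngle {s t : ℝ} (hs : s ≤ 0) (ht : 1 ≤ t) :
    normalizedAngle θ t - normalizedAngle θ s = θ 1 - θ 0 := by
  simp only [normalizedAngle, IccExtend_of_le_left _ _ hs, IccExtend_of_right_le _ _ ht]
  ring

lemma normalizedAngle_mem_Icc (hθ : MonotoneOn θ (Icc 0 1)) (hvar : θ 1 - θ 0 ≤ 2 * π)
    (t : ℝ) : normalizedAngle θ t ∈ Icc 0 (4 * π) := by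
  have h0 := normalizedAngle_of_mem (θ := θ) (left_mem_Icc.2 zero_le_one)
  have h01 := normalizedAngle_sub_normalizedAngle (θ := θ) le_rfl le_rfl
  have hlow := normalizedAngle_sub_normalizedAngle (θ := θ) (min_le_left 0 t) le_rfl
  have hhigh := normalizedAngle_sub_normalizedAngle (θ := θ) le_rfl (le_max_left 1 t)
  have := Int.sub_floor_div_mul_nonneg (θ 0) two_pi_pos
  have := Int.sub_floor_div_mul_lt (θ 0) two_pi_pos
  have := monotone_normalizedAngle hθ (min_le_right 0 t)
  have := monotone_normalizedAngle hθ (le_max_right 1 t)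
  constructor <;> linarith

lemma dirVec_normalizedAngle : EqOn (dirVec (normalizedAngle θ)) (dirVec θ) (Icc 0 1) := by
  intro t ht
  rw [dirVec, normalizedAngle_of_mem ht, cos_sub_int_mul_two_pi, sin_sub_int_mul_two_pi]

lemma integral_dirVec_normalizedAngle {a b : ℝ} (ha : a ∈ Icc (0 : ℝ) 1)
    (hb : b ∈ Icc (0 : ℝ) 1) :
    ∫ s in a..b, dirVec (normalizedAngle θ) s = ∫ s in a..b, dirVec θ s :=
  intervalIntegral.integral_congr (dirVec_normalizedAngle.mono (uIcc_subset_Icc ha hb))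

end normalizedAngle

theorem Monotone.exists_partition_Icc {ψ : ℝ → ℝ} (hψ : Monotone ψ) {a b c : ℝ} (hab : a ≤ b)
    (hc : 0 ≤ c) (n : ℕ) (hvar : ψ b ≤ ψ a + n * c) :
    ∃ T : ℕ → ℝ, Monotone T ∧ T 0 = a ∧ T (n + 1) = b ∧
      ∀ i : ℕ, ∀ s ∈ Ioo (T i) (T (i + 1)), ψ a + (i - 1) * c ≤ ψ s ∧ ψ s ≤ ψ a + i * c := by
  let S : ℕ → Set ℝ := fun i => {t ∈ Icc a b | ψ t ≤ ψ a + i * c}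
  have ha : ∀ i, a ∈ S i := fun i =>
    ⟨left_mem_Icc.2 hab, le_add_of_nonneg_right (mul_nonneg i.cast_nonneg hc)⟩
  have hbdd : ∀ i, BddAbove (S i) := fun i => ⟨b, fun t ht => ht.1.2⟩
  have hS : Monotone S := fun i j hij t ht => ⟨ht.1, ht.2.trans (by gcongr)⟩
  let T : ℕ → ℝ := fun i => Nat.casesOn i a fun j => sSup (S j)
  have hT_mem : ∀ i, T i ∈ Icc a b := by
    rintro (_ | j)
    · exact left_mem_Icc.2 hab
    · exact ⟨le_csSup (hbdd j) (ha j), csSup_le ⟨a, ha j⟩ fun t ht => ht.1.2⟩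
  refine ⟨T, monotone_nat_of_le_succ ?_, rfl, ?_, ?_⟩
  · rintro (_ | j)
    · exact (hT_mem 1).1
    · exact csSup_le_csSup (hbdd _) ⟨a, ha j⟩ (hS j.le_succ)
  · exact le_antisymm (hT_mem (n + 1)).2 (le_csSup (hbdd n) ⟨right_mem_Icc.2 hab, hvar⟩)
  · intro i s hs
    constructor
    · rcases i with _ | j
      · have : ψ a ≤ ψ s := hψ hs.1.le
        push_cast
        linarith
      · have hs_mem : s ∈ Icc a b :=
          ⟨(hT_mem (j + 1)).1.trans hs.1.le, hs.2.le.trans (hT_mem (j + 2)).2⟩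
        have : ψ a + j * c < ψ s := not_le.1 fun h => hs.1.not_ge (le_csSup (hbdd j) ⟨hs_mem, h⟩)
        push_cast
        linarith
    · obtain ⟨t, ht, hst⟩ := exists_lt_of_lt_csSup ⟨a, ha i⟩ hs.2
      exact (hψ hst.le).trans ht.2

lemma le_of_norm_integral_dirVec_le {ψ : ℝ → ℝ} (hψ : Monotone ψ) (hvar : ψ 1 - ψ 0 ≤ 2 * π)
    {ℓ D : ℝ} (hℓ : 0 ≤ ℓ)
    (hdisp : ∀ a b, 0 ≤ a → a ≤ b → b ≤ 1 → ℓ * ‖∫ s in a..b, dirVec ψ s‖ ≤ D) :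
    ℓ ≤ 14 * D := by
  obtain ⟨T, hT, hT0, hT7, hpiece⟩ :=
    hψ.exists_partition_Icc zero_le_one (by positivity : 0 ≤ π / 3) 6 (by linarith)
  have hT_mem : ∀ i ≤ 7, T i ∈ Icc 0 1 := fun i hi => ⟨hT0 ▸ hT i.zero_le, hT7 ▸ hT hi⟩
  -- Over each piece the direction stays within `π / 6` of the middle angle, so the chord is
  -- at least `cos (π / 6) ≥ 1 / 2` times the length of the piece.
  have hchord : ∀ i < 7, ℓ * (T (i + 1) - T i) / 2 ≤ D := fun i hi => by
    have hcos := mul_cos_le_norm_integral_dirVec hψ.measurable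
      (β := ψ 0 + i * (π / 3) - π / 6) (δ := π / 6) (hT i.le_succ) (by linarith [pi_pos])
      fun s hs => by
        have := hpiece i s hs
        rw [abs_le]; constructor <;> linarith
    have h2 : 1 / 2 ≤ cos (π / 6) := by
      rw [cos_pi_div_six]
      nlinarith [sq_sqrt (show (0 : ℝ) ≤ 3 by norm_num), sqrt_nonneg 3]
    have := hdisp _ _ (hT_mem i (by omega)).1 (hT i.le_succ) (hT_mem (i + 1) (by omega)).2
    nlinarith [mul_le_mul_of_nonneg_left hcos hℓ, mul_le_mul_of_nonneg_left h2 hℓ,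
      sub_nonneg.2 (hT i.le_succ)]
  have hsum : ∑ i ∈ Finset.range 7, (T (i + 1) - T i) = 1 := by
    rw [Finset.sum_range_sub, hT7, hT0, sub_zero]
  have := Finset.sum_le_sum fun i hi => hchord i (Finset.mem_range.1 hi)
  rw [← Finset.sum_div, ← Finset.mul_sum, hsum] at this
  simp only [Finset.sum_const, Finset.card_range, nsmul_eq_mul] at this
  linarith

lemma length_mem_Icc_of_mapsTo {θ : ℝ → ℝ} (hθ : MonotoneOn θ (Icc 0 1))
    (hvar : θ 1 - θ 0 ≤ 2 * π) {ℓ : ℝ} (hℓ : 0 ≤ ℓ) {K : Set (EuclideanSpace ℝ (Fin 2))}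
    (hK : IsBounded K) {x : EuclideanSpace ℝ (Fin 2)} {σ : ℝ → EuclideanSpace ℝ (Fin 2)}
    (hσ : ∀ t, σ t = x + ℓ • ∫ s in (0 : ℝ)..t, dirVec θ s) (hrange : MapsTo σ (Icc 0 1) K) :
    ℓ ∈ Icc ‖σ 1 - σ 0‖ (14 * Metric.diam K) := by
  have hψ := monotone_normalizedAngle hθ
  have h0 : (0 : ℝ) ∈ Icc 0 1 := left_mem_Icc.2 zero_le_one
  have hchord {a b : ℝ} (ha : a ∈ Icc (0 : ℝ) 1) (hb : b ∈ Icc (0 : ℝ) 1) :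
      ‖σ b - σ a‖ = ℓ * ‖∫ s in a..b, dirVec (normalizedAngle θ) s‖ := by
    have hint := intervalIntegrable_dirVec hψ.measurable
    rw [hσ, hσ, add_sub_add_left_eq_sub, ← smul_sub, ← integral_dirVec_normalizedAngle h0 hb,
      ← integral_dirVec_normalizedAngle h0 ha,
      intervalIntegral.integral_interval_sub_left (hint 0 b) (hint 0 a), norm_smul,
      Real.norm_of_nonneg hℓ]
  constructor
  · rw [hchord h0 (right_mem_Icc.2 zero_le_one)]
    simpa using mul_le_mul_of_nonneg_left (norm_integral_dirVec_le _ zero_le_one) hℓ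
  · refine le_of_norm_integral_dirVec_le hψ
      ((normalizedAngle_sub_normalizedAngle le_rfl le_rfl).trans_le hvar) hℓ
      fun a b ha hab hb => ?_
    have ha' : a ∈ Icc (0 : ℝ) 1 := ⟨ha, hab.trans hb⟩
    have hb' : b ∈ Icc (0 : ℝ) 1 := ⟨ha.trans hab, hb⟩
    rw [← hchord ha' hb', ← dist_eq_norm]
    exact Metric.dist_le_diam_of_mem hK (hrange hb') (hrange ha')

lemma tendsto_of_tendsto_rat_of_continuousAt {f : ℕ → ℝ → ℝ} (hf : ∀ k, Monotone (f k))
    {G : ℚ → ℝ} (hG : ∀ r : ℚ, Tendsto (fun k => f k r) atTop (𝓝 (G r))) {g : ℝ → ℝ}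
    (hlow : ∀ (r : ℚ) (t : ℝ), r < t → G r ≤ g t) (hup : ∀ (r : ℚ) (t : ℝ), t < r → g t ≤ G r)
    {t : ℝ} (ht : ContinuousAt g t) : Tendsto (fun k => f k t) atTop (𝓝 (g t)) := by
  refine tendsto_order.2 ⟨fun u hu => ?_, fun u hu => ?_⟩
  · obtain ⟨t', hu', ht't⟩ := (((ht.mono_left nhdsWithin_le_nhds).eventually
      (lt_mem_nhds hu)).and (self_mem_nhdsWithin (s := Iio t))).exists
    obtain ⟨r, ht'r, hrt⟩ := exists_rat_btwn ht't
    filter_upwards [(hG r).eventually_const_lt (hu'.trans_le (hup r t' ht'r))] with k hk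
    exact hk.trans_le (hf k hrt.le)
  · obtain ⟨t', hu', htt'⟩ := (((ht.mono_left nhdsWithin_le_nhds).eventually
      (gt_mem_nhds hu)).and (self_mem_nhdsWithin (s := Ioi t))).exists
    obtain ⟨r, htr, hrt'⟩ := exists_rat_btwn htt'
    filter_upwards [(hG r).eventually_lt_const ((hlow r t' hrt').trans_lt hu')] with k hk
    exact (hf k htr.le).trans_lt hk

theorem exists_subseq_tendsto_of_monotone {f : ℕ → ℝ → ℝ} (hf : ∀ k, Monotone (f k)) {m M : ℝ}
    (hbd : ∀ k t, f k t ∈ Icc m M) :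
    ∃ φ : ℕ → ℕ, StrictMono φ ∧ ∃ g : ℝ → ℝ, Monotone g ∧
      ∀ t, ContinuousAt g t → Tendsto (fun k => f (φ k) t) atTop (𝓝 (g t)) := by
  obtain ⟨G, hGmem, φ, hφ, hGlim⟩ := (isCompact_univ_pi fun _ : ℚ => isCompact_Icc).tendsto_subseq
    (x := fun k (r : ℚ) => f k r) fun k => mem_univ_pi.2 fun r => hbd k r
  have hG : ∀ r : ℚ, Tendsto (fun k => f (φ k) r) atTop (𝓝 (G r)) :=
    fun r => tendsto_pi_nhds.1 hGlim r
  have hGmono : Monotone G := fun r s hrs =>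
    le_of_tendsto_of_tendsto' (hG r) (hG s) fun k => hf _ (by exact_mod_cast hrs)
  let g : ℝ → ℝ := fun t => ⨅ r : {r : ℚ // t < r}, G r
  have hne : ∀ t : ℝ, Nonempty {r : ℚ // t < r} := fun t =>
    let ⟨r, hr⟩ := exists_rat_gt t; ⟨⟨r, hr⟩⟩
  have hbdd : ∀ t : ℝ, BddBelow (range fun r : {r : ℚ // t < r} => G r) := fun t =>
    ⟨m, by rintro _ ⟨r, rfl⟩; exact (hGmem r trivial).1⟩
  have hup : ∀ (r : ℚ) (t : ℝ), t < r → g t ≤ G r := fun r t h => ciInf_le (hbdd t) ⟨r, h⟩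
  have hlow : ∀ (r : ℚ) (t : ℝ), r < t → G r ≤ g t := fun r t h =>
    have := hne t
    le_ciInf fun r' => hGmono (by exact_mod_cast (h.trans r'.2).le)
  refine ⟨φ, hφ, g, fun s t hst => ?_, fun t ht =>
    tendsto_of_tendsto_rat_of_continuousAt (fun k => hf (φ k)) hG hlow hup ht⟩
  have := hne t
  exact le_ciInf fun r => hup r s (hst.trans_lt r.2)

theorem exists_subseq_ae_tendsto_of_monotone {f : ℕ → ℝ → ℝ} (hf : ∀ k, Monotone (f k))
    {m M : ℝ} (hbd : ∀ k t, f k t ∈ Icc m M) :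
    ∃ φ : ℕ → ℕ, StrictMono φ ∧ ∃ g : ℝ → ℝ, Monotone g ∧
      ∀ᵐ t, Tendsto (fun k => f (φ k) t) atTop (𝓝 (g t)) :=
  let ⟨φ, hφ, g, hg, hlim⟩ := exists_subseq_tendsto_of_monotone hf hbd
  ⟨φ, hφ, g, hg, (hg.countable_not_continuousAt.ae_notMem volume).mono fun t ht =>
    hlim t (not_not.1 ht)⟩

theorem Monotone.sub_le_of_ae_tendsto {f : ℕ → ℝ → ℝ} {g : ℝ → ℝ} (hg : Monotone g)
    (hlim : ∀ᵐ t, Tendsto (fun k => f k t) atTop (𝓝 (g t))) {a b C : ℝ}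
    (hf : ∀ k, ∀ s ≤ a, ∀ t, b ≤ t → f k t - f k s ≤ C) : g b - g a ≤ C := by
  obtain ⟨s, hs, hs_lim⟩ := Measure.exists_mem_of_measure_ne_zero_of_ae (s := Ioo (a - 1) a)
    (by simp) (ae_restrict_of_ae hlim)
  obtain ⟨t, ht, ht_lim⟩ := Measure.exists_mem_of_measure_ne_zero_of_ae (s := Ioo b (b + 1))
    (by simp) (ae_restrict_of_ae hlim)
  have := le_of_tendsto' (ht_lim.sub hs_lim) fun k => hf k s hs.2.le t ht.1.le
  linarith [hg hs.2.le, hg ht.1.le]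

lemma tendsto_integral_norm_smul_dirVec_sub {ι : Type*} {l : Filter ι} [l.IsCountablyGenerated]
    {c : ι → ℝ} {c' : ℝ} {ψ : ι → ℝ → ℝ} {θ : ℝ → ℝ} (hψ : ∀ i, Measurable (ψ i))
    (hθ : Measurable θ) (hc : Tendsto c l (𝓝 c'))
    (hlim : ∀ᵐ t, Tendsto (fun i => ψ i t) l (𝓝 (θ t))) (a b : ℝ) :
    Tendsto (fun i => ∫ t in a..b, ‖c i • dirVec (ψ i) t - c' • dirVec θ t‖) l (𝓝 0) := by
  have hbound : ∀ᶠ i in l, ∀ᵐ t, t ∈ Ι a b →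
      ‖‖c i • dirVec (ψ i) t - c' • dirVec θ t‖‖ ≤ ‖c'‖ + 1 + ‖c'‖ := by
    filter_upwards [hc.norm.eventually_lt_const (lt_add_one ‖c'‖)] with i hi
    refine .of_forall fun t _ => ?_
    rw [norm_norm]
    refine (norm_sub_le _ _).trans ?_
    rw [norm_smul, norm_smul, norm_dirVec, norm_dirVec, mul_one, mul_one]
    linarith
  have hconv : ∀ᵐ t, t ∈ Ι a b →
      Tendsto (fun i => ‖c i • dirVec (ψ i) t - c' • dirVec θ t‖) l (𝓝 0) := by
    filter_upwards [hlim] with t ht _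
    exact tendsto_iff_norm_sub_tendsto_zero.1 (hc.smul ((continuous_dirVec_id.tendsto _).comp ht))
  simpa using intervalIntegral.tendsto_integral_filter_of_dominated_convergence _
    (.of_forall fun i => (((hψ i).aestronglyMeasurable_dirVec.const_smul (c i)).sub
      (hθ.aestronglyMeasurable_dirVec.const_smul c')).norm)
    hbound intervalIntegrable_const hconv

lemma tendstoUniformlyOn_integral_of_tendsto_integral_norm_sub {E ι : Type*}
    [NormedAddCommGroup E] [NormedSpace ℝ E] {l : Filter ι} {v : ι → ℝ → E} {w : ℝ → E} {a b : ℝ}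
    (hv : ∀ i, IntervalIntegrable (v i) volume a b) (hw : IntervalIntegrable w volume a b)
    (h : Tendsto (fun i => ∫ t in a..b, ‖v i t - w t‖) l (𝓝 0)) (x : E) :
    TendstoUniformlyOn (fun i t => x + ∫ s in a..t, v i s) (fun t => x + ∫ s in a..t, w s) l
      (Icc a b) := by
  refine Metric.tendstoUniformlyOn_iff.2 fun ε hε => ?_
  filter_upwards [h.eventually (gt_mem_nhds hε)] with i hi t ht
  have hsub : [[a, t]] ⊆ [[a, b]] := uIcc_subset_uIcc_left (by rwa [uIcc_of_le (ht.1.trans ht.2)])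
  calc dist (x + ∫ s in a..t, w s) (x + ∫ s in a..t, v i s)
      = ‖∫ s in a..t, (v i s - w s)‖ := by
        rw [dist_comm, dist_eq_norm, add_sub_add_left_eq_sub,
          intervalIntegral.integral_sub ((hv i).mono_set hsub) (hw.mono_set hsub)]
    _ ≤ ∫ s in a..t, ‖v i s - w s‖ := intervalIntegral.norm_integral_le_integral_norm ht.1
    _ ≤ ∫ s in a..b, ‖v i s - w s‖ :=
        intervalIntegral.integral_mono_interval le_rfl ht.1 ht.2
          (.of_forall fun _ => norm_nonneg _) ((hv i).sub hw).norm
    _ < ε := hi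

lemma TendstoUniformlyOn.tendsto_integral_norm_sub {E ι : Type*} [NormedAddCommGroup E]
    {l : Filter ι} {F : ι → ℝ → E} {f : ℝ → E} {a b : ℝ} (hab : a ≤ b)
    (h : TendstoUniformlyOn F f l (Icc a b)) :
    Tendsto (fun i => ∫ t in a..b, ‖F i t - f t‖) l (𝓝 0) := by
  refine Metric.tendsto_nhds.2 fun ε hε => ?_
  filter_upwards [Metric.tendstoUniformlyOn_iff.1 h (ε / (b - a + 1)) (by positivity)] with i hi
  have hle : ‖∫ t in a..b, ‖F i t - f t‖‖ ≤ ε / (b - a + 1) * |b - a| :=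
    intervalIntegral.norm_integral_le_of_norm_le_const fun t ht => by
      rw [norm_norm, ← dist_eq_norm, dist_comm]
      exact (hi t (uIoc_subset_uIcc ht |> (uIcc_of_le hab ▸ ·))).le
  rw [Real.dist_0_eq_abs, ← Real.norm_eq_abs]
  refine hle.trans_lt ?_
  rw [abs_of_nonneg (sub_nonneg.2 hab), div_mul_eq_mul_div, div_lt_iff₀ (by linarith)]
  nlinarith

theorem stmt_8_general (Ω : Set (EuclideanSpace ℝ (Fin 2)))
    (hΩb : IsBounded Ω)
    (p q : EuclideanSpace ℝ (Fin 2)) (hpq : p ≠ q)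
    (θ : ℕ → ℝ → ℝ) (ℓ : ℕ → ℝ) (σ : ℕ → ℝ → EuclideanSpace ℝ (Fin 2))
    (hσ : ∀ k t, σ k t = q + ℓ k • ∫ s in (0:ℝ)..t, dirVec (θ k) s)
    (hmono : ∀ k, MonotoneOn (θ k) (Set.Icc 0 1))
    (hθ : ∀ k, θ k 1 - θ k 0 ≤ 2 * Real.pi)
    (hℓpos : ∀ k, 0 < ℓ k)
    (hend : ∀ k, σ k 1 = p)
    (hrange : ∀ k, ∀ t ∈ Set.Icc (0:ℝ) 1, σ k t ∈ closure Ω) :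
    ∃ (φ : ℕ → ℕ), StrictMono φ ∧
      ∃ (ℓ' : ℝ) (θ' : ℝ → ℝ) (σ' : ℝ → EuclideanSpace ℝ (Fin 2)),
        (∀ t, σ' t = q + ℓ' • ∫ s in (0:ℝ)..t, dirVec θ' s) ∧
        MonotoneOn θ' (Set.Icc 0 1) ∧ θ' 1 - θ' 0 ≤ 2 * Real.pi ∧
        0 < ℓ' ∧ σ' 1 = p ∧ (∀ t ∈ Set.Icc (0:ℝ) 1, σ' t ∈ closure Ω) ∧
        Tendsto (fun k => ∫ t in (0:ℝ)..1, ‖σ (φ k) t - σ' t‖) atTop (𝓝 0) ∧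
        Tendsto (fun k => ∫ t in (0:ℝ)..1, ‖ℓ (φ k) • dirVec (θ (φ k)) t - ℓ' • dirVec θ' t‖)
          atTop (𝓝 0) ∧
        TendstoUniformlyOn (fun k => σ (φ k)) σ' atTop (Set.Icc 0 1) := by
  let ψ k := normalizedAngle (θ k)
  have hψ k : Monotone (ψ k) := monotone_normalizedAngle (hmono k)
  have hσψ k : ∀ t ∈ Icc (0 : ℝ) 1, σ k t = q + ℓ k • ∫ s in (0 : ℝ)..t, dirVec (ψ k) s :=
    fun t ht => by rw [hσ, integral_dirVec_normalizedAngle (left_mem_Icc.2 zero_le_one) ht]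
  have hℓ_mem k : ℓ k ∈ Icc ‖p - q‖ (14 * Metric.diam (closure Ω)) := by
    simpa [hend, hσ k 0] using length_mem_Icc_of_mapsTo (hmono k) (hθ k) (hℓpos k).le
      hΩb.closure (hσ k) (hrange k)
  obtain ⟨ℓ', hℓ', φ₁, hφ₁, hℓφ₁⟩ := isCompact_Icc.tendsto_subseq hℓ_mem
  obtain ⟨φ₂, hφ₂, θ', hθ', hlim⟩ := exists_subseq_ae_tendsto_of_monotone
    (fun k => hψ (φ₁ k)) fun k => normalizedAngle_mem_Icc (hmono (φ₁ k)) (hθ (φ₁ k))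
  have hW11 : Tendsto (fun k => ∫ t in (0 : ℝ)..1,
      ‖ℓ (φ₁ (φ₂ k)) • dirVec (ψ (φ₁ (φ₂ k))) t - ℓ' • dirVec θ' t‖) atTop (𝓝 0) :=
    tendsto_integral_norm_smul_dirVec_sub (fun k => (hψ _).measurable) hθ'.measurable
      (hℓφ₁.comp hφ₂.tendsto_atTop) hlim 0 1
  let σ' t := q + ℓ' • ∫ s in (0 : ℝ)..t, dirVec θ' s
  have hunif : TendstoUniformlyOn (fun k => σ (φ₁ (φ₂ k))) σ' atTop (Icc 0 1) := by
    have := tendstoUniformlyOn_integral_of_tendsto_integral_norm_sub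
      (fun k => (intervalIntegrable_dirVec (hψ (φ₁ (φ₂ k))).measurable 0 1).smul (ℓ (φ₁ (φ₂ k))))
      ((intervalIntegrable_dirVec hθ'.measurable 0 1).smul ℓ') hW11 q
    simp only [Pi.smul_apply, intervalIntegral.integral_smul] at this
    exact this.congr (.of_forall fun k t ht => (hσψ _ t ht).symm)
  refine ⟨φ₁ ∘ φ₂, hφ₁.comp hφ₂, ℓ', θ', σ', fun t => rfl, hθ'.monotoneOn _,
    hθ'.sub_le_of_ae_tendsto hlim fun k s hs t ht =>
      (normalizedAngle_sub_normalizedAngle hs ht).trans_le (hθ _),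
    (norm_pos_iff.2 (sub_ne_zero.2 hpq)).trans_le hℓ'.1,
    tendsto_nhds_unique (hunif.tendsto_at (right_mem_Icc.2 zero_le_one)) (by simp [hend]),
    fun t ht => isClosed_closure.mem_of_tendsto (hunif.tendsto_at ht)
      (.of_forall fun k => hrange _ t ht),
    hunif.tendsto_integral_norm_sub zero_le_one, ?_, hunif⟩
  refine hW11.congr fun k => intervalIntegral.integral_congr fun t ht => ?_
  rw [uIcc_of_le zero_le_one] at ht
  simp only [Function.comp_apply, ψ, dirVec_normalizedAngle ht]

/-- Compactness of constant-speed convex-type curves: a sequence of Lipschitz curves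
`σₖ(t) = q + ℓₖ ∫₀ᵗ (cos θₖ(s), sin θₖ(s)) ds` in `closure Ω` with `θₖ` nondecreasing,
`θₖ(1) − θₖ(0) ≤ 2π` and `σₖ(1) = p` admits a subsequence converging, in `W^{1,1}([0,1];ℝ²)`
and uniformly on `[0,1]`, to a curve `σ` of the same form. -/
theorem stmt_8 (Ω : Set (EuclideanSpace ℝ (Fin 2)))
    (hΩo : IsOpen Ω) (hΩb : IsBounded Ω) (hΩc : Convex ℝ Ω)
    (p q : EuclideanSpace ℝ (Fin 2)) (hp : p ∈ frontier Ω) (hq : q ∈ frontier Ω) (hpq : p ≠ q)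
    (θ : ℕ → ℝ → ℝ) (ℓ : ℕ → ℝ) (σ : ℕ → ℝ → EuclideanSpace ℝ (Fin 2))
    (hσ : ∀ k t, σ k t = q + ℓ k • ∫ s in (0:ℝ)..t, dirVec (θ k) s)
    (hmono : ∀ k, MonotoneOn (θ k) (Set.Icc 0 1))
    (hθ : ∀ k, θ k 1 - θ k 0 ≤ 2 * Real.pi)
    (hℓpos : ∀ k, 0 < ℓ k)
    (hend : ∀ k, σ k 1 = p)
    (hrange : ∀ k, ∀ t ∈ Set.Icc (0:ℝ) 1, σ k t ∈ closure Ω) :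
    ∃ (φ : ℕ → ℕ), StrictMono φ ∧
      ∃ (ℓ' : ℝ) (θ' : ℝ → ℝ) (σ' : ℝ → EuclideanSpace ℝ (Fin 2)),
        (∀ t, σ' t = q + ℓ' • ∫ s in (0:ℝ)..t, dirVec θ' s) ∧
        MonotoneOn θ' (Set.Icc 0 1) ∧ θ' 1 - θ' 0 ≤ 2 * Real.pi ∧
        0 < ℓ' ∧ σ' 1 = p ∧ (∀ t ∈ Set.Icc (0:ℝ) 1, σ' t ∈ closure Ω) ∧
        Tendsto (fun k => ∫ t in (0:ℝ)..1, ‖σ (φ k) t - σ' t‖) atTop (𝓝 0) ∧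
        Tendsto (fun k => ∫ t in (0:ℝ)..1, ‖ℓ (φ k) • dirVec (θ (φ k)) t - ℓ' • dirVec θ' t‖)
          atTop (𝓝 0) ∧
        TendstoUniformlyOn (fun k => σ (φ k)) σ' atTop (Set.Icc 0 1) :=
  stmt_8_general Ω hΩb p q hpq θ ℓ σ hσ hmono hθ hℓpos hend hrange
end
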